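/- Let A be an invertible Hermitian matrix with ‖A⁻¹‖₂ ≤ 1 (all eigenvalues of absolute value at least 1), and let B = ½(A⁻¹ + A). Then ‖B² − I‖₂ ≤ ¼ ‖A⁻¹‖₂² ‖A² − I‖₂² ≤ ¼ ‖A² − I‖₂². -/
import Mathlib


open Matrix
open scoped Matrix.Norms.L2Operator

/-- Spectral norm (operator 2-norm) of a complex matrix. -/
noncomputable def specNorm {n : ℕ} (A : Matrix (Fin n) (Fin n) ℂ) : ℝ :=
  ‖(Matrix.toEuclideanLin A).toContinuousLinearMap‖

lemma specNorm_eq {n : ℕ} (A : Matrix (Fin n) (Fin n) ℂ) : specNorm A = ‖A‖ := rfl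

/-- Newton sign-iteration step bound: if A is an invertible Hermitian matrix with
‖A⁻¹‖₂ ≤ 1 and B = ½(A⁻¹ + A), then ‖B² − I‖₂ ≤ ¼‖A⁻¹‖₂²‖A² − I‖₂² ≤ ¼‖A² − I‖₂². -/
theorem newton_sign_step {n : ℕ} (A B : Matrix (Fin n) (Fin n) ℂ)
    (hA : A.IsHermitian) (hinv : IsUnit A) (hnorm : specNorm A⁻¹ ≤ 1)
    (hB : B = (1 / 2 : ℂ) • (A⁻¹ + A)) :
    specNorm (B ^ 2 - 1) ≤ 1 / 4 * specNorm A⁻¹ ^ 2 * specNorm (A ^ 2 - 1) ^ 2 ∧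
    1 / 4 * specNorm A⁻¹ ^ 2 * specNorm (A ^ 2 - 1) ^ 2 ≤ 1 / 4 * specNorm (A ^ 2 - 1) ^ 2 := by
  have key : B ^ 2 - 1 = (1/4 : ℂ) • ((A⁻¹)^2 * (A^2 - 1)^2) := by
    subst hB
    have h1 : A⁻¹ * A = 1 := nonsing_inv_mul A ((isUnit_iff_isUnit_det A).mp hinv)
    have h2 : A * A⁻¹ = 1 := mul_nonsing_inv A ((isUnit_iff_isUnit_det A).mp hinv)
    simp only [pow_two, smul_mul_smul_comm, mul_sub, sub_mul, mul_add, add_mul, mul_one, one_mul,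
      mul_assoc, h1, h2]
    simp only [← mul_assoc, h1, h2, one_mul, mul_one, smul_sub, smul_add]
    module
  simp only [specNorm_eq] at *
  have hnn : (0:ℝ) ≤ ‖A⁻¹‖ := norm_nonneg _
  have hnn2 : (0:ℝ) ≤ ‖A ^ 2 - 1‖ := norm_nonneg _
  constructor
  · calc ‖B ^ 2 - 1‖ = ‖(1/4 : ℂ) • ((A⁻¹)^2 * (A^2 - 1)^2)‖ := by rw [key]
    _ = 1/4 * ‖(A⁻¹)^2 * (A^2 - 1)^2‖ := by
        rw [norm_smul]; norm_num
    _ ≤ 1/4 * (‖(A⁻¹)^2‖ * ‖(A^2 - 1)^2‖) := by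
        have := norm_mul_le ((A⁻¹)^2) ((A^2 - 1)^2)
        nlinarith
    _ ≤ 1/4 * (‖A⁻¹‖^2 * ‖A^2 - 1‖^2) := by
        have h3 := norm_pow_le' (A⁻¹) (by norm_num : 0 < 2)
        have h4 := norm_pow_le' (A^2 - 1) (by norm_num : 0 < 2)
        have h5 : (0:ℝ) ≤ ‖(A⁻¹)^2‖ := norm_nonneg _
        nlinarith
    _ = 1/4 * ‖A⁻¹‖^2 * ‖A^2 - 1‖^2 := by ring
  · nlinarith [sq_nonneg ‖A ^ 2 - 1‖, sq_nonneg ‖A⁻¹‖, mul_self_nonneg ‖A ^ 2 - 1‖, mul_le_one₀ hnorm hnn hnorm]
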